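/- Let H be a densely defined self-adjoint operator on ℋ, and let ρ be a Hilbert–Schmidt operator with ρ* = ρ such that ρ maps ℋ into Dom H and Hρ is an (everywhere-defined) Hilbert–Schmidt operator. Then ρ ∈ Dom 𝐇; in particular, for such an initial condition ρ(0) = ρ the Liouville–von Neumann evolution ρ(t) = U(t) ρ U(t)* satisfies i (d/dt)ρ(t) = 𝐇ρ(t) in Hilbert–Schmidt norm for all t ∈ ℝ. -/

import Mathlib

open Filter Topology ContinuousLinearMap
open scoped InnerProductSpace

noncomputable section

namespace LiouvilleFormalization

variable {H : Type*} [NormedAddCommGroup H] [InnerProductSpace ℂ H] [CompleteSpace H]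

/-- `A` is Hilbert–Schmidt with respect to the orthonormal basis `e`
(equivalently, with respect to every orthonormal basis). -/
def IsHS (e : HilbertBasis ℕ ℂ H) (A : H →L[ℂ] H) : Prop :=
  Summable fun n => ‖A (e n)‖ ^ 2

/-- The Hilbert–Schmidt norm of `A` computed in the orthonormal basis `e`. -/
def hsNorm (e : HilbertBasis ℕ ℂ H) (A : H →L[ℂ] H) : ℝ :=
  Real.sqrt (∑' n, ‖A (e n)‖ ^ 2)

/-- The Hilbert–Schmidt inner product `⟨A, B⟩_HS = Σₙ ⟨A eₙ, B eₙ⟩`. -/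
def hsInner (e : HilbertBasis ℕ ℂ H) (A B : H →L[ℂ] H) : ℂ :=
  ∑' n, (inner ℂ (A (e n)) (B (e n)) : ℂ)

/-- The conjugation superoperator `A ↦ U(t) A U(t)*`. -/
def conjSup (U : ℝ → H →L[ℂ] H) (t : ℝ) (A : H →L[ℂ] H) : H →L[ℂ] H :=
  U t ∘L A ∘L adjoint (U t)

/-- `U` is a strongly continuous one-parameter unitary group. -/
structure IsUnitaryGroup (U : ℝ → H →L[ℂ] H) : Prop where
  map_zero : U 0 = 1
  map_add : ∀ t s : ℝ, U (t + s) = U t ∘L U s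
  unitary_left : ∀ t : ℝ, adjoint (U t) ∘L U t = 1
  unitary_right : ∀ t : ℝ, U t ∘L adjoint (U t) = 1
  strong_continuous : ∀ ψ : H, Continuous fun t : ℝ => U t ψ

/-- A densely defined operator is self-adjoint if it coincides with its adjoint. -/
def IsSelfAdjointOp (T : H →ₗ.[ℂ] H) : Prop :=
  Dense (T.domain : Set H) ∧ T.adjoint = T

/-- `T` is the infinitesimal generator of the unitary group `U`, i.e. `U(t) = e^{-itT}`:
the domain of `T` is exactly the set of vectors where the strong derivative at `t = 0`
exists, and there the derivative equals `-i T ψ`. -/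
structure IsGenerator (U : ℝ → H →L[ℂ] H) (T : H →ₗ.[ℂ] H) : Prop where
  mem_dom : ∀ ψ : H,
    ψ ∈ T.domain ↔ ∃ L : H, Tendsto (fun t : ℝ => t⁻¹ • (U t ψ - ψ)) (𝓝[≠] 0) (𝓝 L)
  deriv : ∀ ψ : T.domain,
    Tendsto (fun t : ℝ => t⁻¹ • (U t ψ - (ψ : H))) (𝓝[≠] 0) (𝓝 ((-Complex.I) • T ψ))

/-- `L = 𝐇 A`: membership of `A` in the domain of the Liouville superoperator `𝐇`
generated by `U`, together with the value `𝐇 A = L`: the difference quotient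
`(U(t) A U(t)* - A)/t` converges in Hilbert–Schmidt norm to `-i L`. -/
def HasLiouville (e : HilbertBasis ℕ ℂ H) (U : ℝ → H →L[ℂ] H) (A L : H →L[ℂ] H) : Prop :=
  IsHS e A ∧ IsHS e L ∧
    Tendsto (fun t : ℝ => hsNorm e (t⁻¹ • (conjSup U t A - A) - (-Complex.I) • L))
      (𝓝[≠] 0) (𝓝 0)

/-- The commutator `[T, A] ψ = T(Aψ) - A(Tψ)` on the domain of `T`, for `A` mapping
`Dom T` into itself. -/
def commAt (T : H →ₗ.[ℂ] H) (A : H →L[ℂ] H)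
    (hm : ∀ x : T.domain, (A x : H) ∈ T.domain) (ψ : T.domain) : H :=
  T ⟨A ψ, hm ψ⟩ - A (T ψ)

end LiouvilleFormalization

/-!
With `B = Hρ` one has `𝐇ρ = B - B*`: formally `[H, ρ] = Hρ - ρH` and `ρH ⊆ (Hρ)* = B*`.
Writing `G t = t⁻¹ (U t ρ - ρ) + i B`, the Liouville difference quotient splits as

  `t⁻¹ (U t ρ U t* - ρ) + i (B - B*) = G t U t* + (i B - i B U t*) + (G t)*`,

the last term using `ρ* = ρ`. Hilbert–Schmidt norms are invariant under adjoints and under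
unitary factors, so it suffices that `‖G t‖_HS → 0` and `‖i B - i B U t*‖_HS → 0`. Both follow by
dominated convergence over the basis: pointwise from the generator property, resp. strong
continuity, with the domination `‖G t eₙ‖ ≤ 2 ‖B eₙ‖` coming from the mean value bound
`‖U t ψ - ψ‖ ≤ |t| ‖Hψ‖`. The evolved state `U t ρ U t*` is handled by conjugating everything
with `U t`, which commutes with the group and preserves Hilbert–Schmidt norms.
-/

open scoped ENNReal

theorem HilbertBasis.hasSum_norm_inner_sq {ι 𝕜 E : Type*} [RCLike 𝕜]
    [NormedAddCommGroup E] [InnerProductSpace 𝕜 E] (b : HilbertBasis ι 𝕜 E) (x : E) :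
    HasSum (fun i => ‖⟪b i, x⟫_𝕜‖ ^ 2) (‖x‖ ^ 2) := by
  have h := RCLike.reCLM.hasSum (b.hasSum_inner_mul_inner x x)
  simp only [RCLike.reCLM_apply, inner_self_eq_norm_sq, ← inner_conj_symm x (b _),
    RCLike.conj_mul] at h
  exact_mod_cast h

theorem HilbertBasis.enorm_sq_eq_tsum {ι 𝕜 E : Type*} [RCLike 𝕜]
    [NormedAddCommGroup E] [InnerProductSpace 𝕜 E] (b : HilbertBasis ι 𝕜 E) (x : E) :
    ‖x‖ₑ ^ 2 = ∑' i, ‖⟪b i, x⟫_𝕜‖ₑ ^ 2 := by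
  have h := b.hasSum_norm_inner_sq x
  simp only [← ofReal_norm, ← ENNReal.ofReal_pow (norm_nonneg _)]
  rw [← ENNReal.ofReal_tsum_of_nonneg (fun i => by positivity) h.summable, h.tsum_eq]

namespace LiouvilleFormalization

variable {H : Type*} [NormedAddCommGroup H] [InnerProductSpace ℂ H]

section HilbertSchmidt

variable (e : HilbertBasis ℕ ℂ H)

/-- Unlike `hsNorm`, this has no junk value: it is `∞` exactly when `A` is not Hilbert–Schmidt,
so identities such as `hsENormSq_adjoint` hold without summability side conditions. -/
def hsENormSq (A : H →L[ℂ] H) : ℝ≥0∞ :=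
  ∑' n, ‖A (e n)‖ₑ ^ 2

variable {e}

theorem isHS_iff_hsENormSq_ne_top {A : H →L[ℂ] H} : IsHS e A ↔ hsENormSq e A ≠ ∞ := by
  simp only [IsHS, hsENormSq, enorm_eq_nnnorm, ← ENNReal.coe_pow,
    ENNReal.tsum_coe_ne_top_iff_summable, ← NNReal.summable_coe, NNReal.coe_pow, coe_nnnorm]

theorem hsNorm_eq_sqrt_hsENormSq (A : H →L[ℂ] H) :
    hsNorm e A = √(hsENormSq e A).toReal := by
  rw [hsNorm, hsENormSq, ENNReal.tsum_toReal_eq fun n => by finiteness]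
  simp

theorem hsNorm_congr {A B : H →L[ℂ] H} (h : hsENormSq e A = hsENormSq e B) :
    hsNorm e A = hsNorm e B := by
  rw [hsNorm_eq_sqrt_hsENormSq, hsNorm_eq_sqrt_hsENormSq, h]

theorem isHS_congr {A B : H →L[ℂ] H} (h : hsENormSq e A = hsENormSq e B) :
    IsHS e A ↔ IsHS e B := by
  rw [isHS_iff_hsENormSq_ne_top, isHS_iff_hsENormSq_ne_top, h]

theorem isHS_iff_memℓp {A : H →L[ℂ] H} : IsHS e A ↔ Memℓp (fun n => A (e n)) 2 := by
  rw [memℓp_gen_iff (by norm_num), IsHS]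
  norm_num

theorem IsHS.add {A B : H →L[ℂ] H} (hA : IsHS e A) (hB : IsHS e B) : IsHS e (A + B) :=
  isHS_iff_memℓp.2 ((isHS_iff_memℓp.1 hA).add (isHS_iff_memℓp.1 hB))

theorem IsHS.sub {A B : H →L[ℂ] H} (hA : IsHS e A) (hB : IsHS e B) : IsHS e (A - B) :=
  isHS_iff_memℓp.2 ((isHS_iff_memℓp.1 hA).sub (isHS_iff_memℓp.1 hB))

theorem IsHS.smul {R : Type*} [NormedRing R] [Module R H] [IsBoundedSMul R H]
    [SMulCommClass ℂ R H] [ContinuousConstSMul R H] (c : R) {A : H →L[ℂ] H} (hA : IsHS e A) :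
    IsHS e (c • A) :=
  isHS_iff_memℓp.2 ((isHS_iff_memℓp.1 hA).const_smul c)

theorem hsNorm_eq_norm_lp {A : H →L[ℂ] H} (f : lp (fun _ : ℕ => H) 2)
    (hf : ∀ n, f n = A (e n)) : hsNorm e A = ‖f‖ := by
  rw [lp.norm_eq_tsum_rpow (by norm_num), hsNorm, Real.sqrt_eq_rpow]
  norm_num [hf]

theorem hsNorm_add_le {A B : H →L[ℂ] H} (hA : IsHS e A) (hB : IsHS e B) :
    hsNorm e (A + B) ≤ hsNorm e A + hsNorm e B := by
  let f : lp (fun _ : ℕ => H) 2 := ⟨_, isHS_iff_memℓp.1 hA⟩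
  let g : lp (fun _ : ℕ => H) 2 := ⟨_, isHS_iff_memℓp.1 hB⟩
  rw [hsNorm_eq_norm_lp f fun n => rfl, hsNorm_eq_norm_lp g fun n => rfl,
    hsNorm_eq_norm_lp (f + g) fun n => rfl]
  exact norm_add_le f g

theorem tendsto_hsNorm_zero {α : Type*} {l : Filter α} {F : α → H →L[ℂ] H} {g : ℕ → ℝ}
    (hg : Summable fun n => g n ^ 2) (hF : ∀ n, Tendsto (fun a => F a (e n)) l (𝓝 0))
    (hFg : ∀ᶠ a in l, ∀ n, ‖F a (e n)‖ ≤ g n) :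
    Tendsto (fun a => hsNorm e (F a)) l (𝓝 0) := by
  have hsum : Tendsto (fun a => ∑' n, ‖F a (e n)‖ ^ 2) l (𝓝 0) := by
    rw [← tsum_zero]
    refine tendsto_tsum_of_dominated_convergence hg (fun n => ?_) ?_
    · simpa using (hF n).norm.pow 2
    · filter_upwards [hFg] with a ha n
      rw [norm_pow, norm_norm]
      exact pow_le_pow_left₀ (norm_nonneg _) (ha n) 2
  simpa [hsNorm, Function.comp_def] using (Real.continuous_sqrt.tendsto 0).comp hsum

theorem hsENormSq_comp_of_isometry {V : H →L[ℂ] H} (hV : ∀ x, ‖V x‖ = ‖x‖) (A : H →L[ℂ] H) :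
    hsENormSq e (V ∘L A) = hsENormSq e A := by
  simp only [hsENormSq, comp_apply, ← ofReal_norm, hV]

theorem IsHS.isometry_comp {V A : H →L[ℂ] H} (hV : ∀ x, ‖V x‖ = ‖x‖) (hA : IsHS e A) :
    IsHS e (V ∘L A) :=
  (isHS_congr (hsENormSq_comp_of_isometry hV A)).2 hA

variable [CompleteSpace H]

theorem hsENormSq_adjoint (A : H →L[ℂ] H) : hsENormSq e (adjoint A) = hsENormSq e A := by
  have parseval (C : H →L[ℂ] H) :
      hsENormSq e C = ∑' n, ∑' m, ‖⟪e m, C (e n)⟫_ℂ‖ₑ ^ 2 :=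
    tsum_congr fun n => e.enorm_sq_eq_tsum (C (e n))
  rw [parseval, parseval, ENNReal.tsum_comm]
  refine tsum_congr fun n => tsum_congr fun m => ?_
  rw [adjoint_inner_right, ← ofReal_norm, ← ofReal_norm, norm_inner_symm]

theorem IsHS.adjoint {A : H →L[ℂ] H} (hA : IsHS e A) : IsHS e (adjoint A) :=
  (isHS_congr (hsENormSq_adjoint A)).2 hA

theorem hsNorm_adjoint (A : H →L[ℂ] H) : hsNorm e (adjoint A) = hsNorm e A :=
  hsNorm_congr (hsENormSq_adjoint A)

theorem hsENormSq_comp_of_mem_unitary {u : H →L[ℂ] H} (hu : u ∈ unitary (H →L[ℂ] H))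
    (A : H →L[ℂ] H) : hsENormSq e (A ∘L u) = hsENormSq e A := by
  rw [← hsENormSq_adjoint, adjoint_comp,
    hsENormSq_comp_of_isometry (V := adjoint u) (norm_map_of_mem_unitary (Unitary.star_mem hu)),
    hsENormSq_adjoint]

theorem IsHS.comp_of_mem_unitary {A u : H →L[ℂ] H} (hA : IsHS e A)
    (hu : u ∈ unitary (H →L[ℂ] H)) : IsHS e (A ∘L u) :=
  (isHS_congr (hsENormSq_comp_of_mem_unitary hu A)).2 hA

theorem hsNorm_comp_of_mem_unitary {u : H →L[ℂ] H} (hu : u ∈ unitary (H →L[ℂ] H))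
    (A : H →L[ℂ] H) : hsNorm e (A ∘L u) = hsNorm e A :=
  hsNorm_congr (hsENormSq_comp_of_mem_unitary hu A)

end HilbertSchmidt

theorem smul_conj_sub_decomposition (c : ℝ) (u v ρ B B' : H →L[ℂ] H) :
    c • (u ∘L ρ ∘L v - ρ) - (-Complex.I) • (B - B')
      = (c • (u ∘L ρ - ρ) + Complex.I • B) ∘L v + (Complex.I • B - (Complex.I • B) ∘L v)
        + (ρ ∘L (c • (v - 1)) - Complex.I • B') := by
  ext φ
  simp only [add_apply, sub_apply, smul_apply, comp_apply, one_apply_eq_self, map_sub,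
    map_smul_of_tower, neg_smul, smul_sub, neg_apply]
  abel

variable [CompleteSpace H] {U : ℝ → H →L[ℂ] H}

namespace IsUnitaryGroup

theorem mem_unitary (hU : IsUnitaryGroup U) (t : ℝ) : U t ∈ unitary (H →L[ℂ] H) :=
  Unitary.mem_iff.2 ⟨hU.unitary_left t, hU.unitary_right t⟩

theorem adjoint_mem_unitary (hU : IsUnitaryGroup U) (t : ℝ) :
    adjoint (U t) ∈ unitary (H →L[ℂ] H) :=
  Unitary.star_mem (hU.mem_unitary t)

theorem norm_apply (hU : IsUnitaryGroup U) (t : ℝ) (x : H) : ‖U t x‖ = ‖x‖ :=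
  norm_map_of_mem_unitary (hU.mem_unitary t) x

theorem tendsto_apply_zero (hU : IsUnitaryGroup U) (x : H) :
    Tendsto (fun t => U t x) (𝓝 0) (𝓝 x) := by
  simpa [hU.map_zero] using (hU.strong_continuous x).tendsto 0

theorem conjSup_add (hU : IsUnitaryGroup U) (s t : ℝ) (A : H →L[ℂ] H) :
    conjSup U (s + t) A = conjSup U s (conjSup U t A) := by
  ext x
  simp [conjSup, hU.map_add, adjoint_comp]

theorem hsENormSq_conjSup (hU : IsUnitaryGroup U) (e : HilbertBasis ℕ ℂ H) (t : ℝ)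
    (A : H →L[ℂ] H) : hsENormSq e (conjSup U t A) = hsENormSq e A := by
  rw [conjSup, hsENormSq_comp_of_isometry (hU.norm_apply t),
    hsENormSq_comp_of_mem_unitary (hU.adjoint_mem_unitary t)]

end IsUnitaryGroup

namespace IsGenerator

variable {T : H →ₗ.[ℂ] H}

theorem hasDerivAt (hgen : IsGenerator U T) (hU : IsUnitaryGroup U) (ψ : T.domain) (s : ℝ) :
    HasDerivAt (fun t => U t ψ) (U s ((-Complex.I) • T ψ)) s := by
  rw [hasDerivAt_iff_tendsto_slope_zero]
  refine ((U s).continuous.tendsto _ |>.comp (hgen.deriv ψ)).congr fun t => ?_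
  simp [hU.map_add]

theorem lipschitzWith (hgen : IsGenerator U T) (hU : IsUnitaryGroup U) (ψ : T.domain) :
    LipschitzWith ‖T ψ‖₊ fun t => U t ψ :=
  lipschitzWith_of_nnnorm_deriv_le (fun s => (hgen.hasDerivAt hU ψ s).differentiableAt)
    fun s => by
      rw [(hgen.hasDerivAt hU ψ s).deriv, ← NNReal.coe_le_coe, coe_nnnorm, coe_nnnorm,
        hU.norm_apply, norm_smul]
      simp

theorem norm_smul_sub_le (hgen : IsGenerator U T) (hU : IsUnitaryGroup U) (ψ : T.domain)
    (t : ℝ) : ‖t⁻¹ • (U t ψ - ψ)‖ ≤ ‖T ψ‖ := by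
  have hlip := (hgen.lipschitzWith hU ψ).dist_le_mul t 0
  simp only [hU.map_zero, dist_eq_norm, sub_zero, coe_nnnorm, Real.norm_eq_abs] at hlip
  rw [norm_smul, norm_inv, Real.norm_eq_abs]
  rcases eq_or_ne t 0 with rfl | ht
  · simp
  · rw [inv_mul_le_iff₀ (abs_pos.2 ht), mul_comm]
    exact hlip

end IsGenerator

section Liouville

variable {e : HilbertBasis ℕ ℂ H} {T : H →ₗ.[ℂ] H}

theorem tendsto_hsNorm_smul_sub_add (hgen : IsGenerator U T) (hU : IsUnitaryGroup U)
    {ρ B : H →L[ℂ] H} (hBHS : IsHS e B) (h : ∀ φ, ρ φ ∈ T.domain)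
    (hB : ∀ φ, B φ = T ⟨ρ φ, h φ⟩) :
    Tendsto (fun t : ℝ => hsNorm e (t⁻¹ • (U t ∘L ρ - ρ) + Complex.I • B)) (𝓝[≠] 0) (𝓝 0) := by
  refine tendsto_hsNorm_zero (g := fun n => 2 * ‖B (e n)‖)
    ((hBHS.mul_left 4).congr fun n => by ring) (fun n => ?_) (.of_forall fun t n => ?_)
  · have hderiv := (hgen.deriv ⟨ρ (e n), h (e n)⟩).add_const (Complex.I • B (e n))
    rw [← hB, neg_smul, neg_add_cancel] at hderiv
    simpa using hderiv
  · have hslope := hgen.norm_smul_sub_le hU ⟨ρ (e n), h (e n)⟩ t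
    rw [← hB] at hslope
    simp only [add_apply, smul_apply, sub_apply, comp_apply]
    calc _ ≤ ‖t⁻¹ • (U t (ρ (e n)) - ρ (e n))‖ + ‖Complex.I • B (e n)‖ := norm_add_le _ _
      _ ≤ 2 * ‖B (e n)‖ := by rw [norm_smul Complex.I, Complex.norm_I, one_mul]; linarith

theorem tendsto_hsNorm_sub_comp_adjoint (hU : IsUnitaryGroup U) {C : H →L[ℂ] H}
    (hC : IsHS e C) :
    Tendsto (fun t : ℝ => hsNorm e (C - C ∘L adjoint (U t))) (𝓝 0) (𝓝 0) := by
  simp_rw [← hsNorm_adjoint (C - _), map_sub, adjoint_comp, adjoint_adjoint]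
  refine tendsto_hsNorm_zero (g := fun n => 2 * ‖adjoint C (e n)‖)
    ((hC.adjoint.mul_left 4).congr fun n => by ring) (fun n => ?_) (.of_forall fun t n => ?_)
  · simpa using (tendsto_const_nhds (x := adjoint C (e n))).sub
      (hU.tendsto_apply_zero (adjoint C (e n)))
  · simp only [sub_apply, comp_apply]
    calc _ ≤ ‖adjoint C (e n)‖ + ‖U t (adjoint C (e n))‖ := norm_sub_le _ _
      _ = 2 * ‖adjoint C (e n)‖ := by rw [hU.norm_apply]; ring

theorem hasLiouville_sub_adjoint (hgen : IsGenerator U T) (hU : IsUnitaryGroup U)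
    {ρ B : H →L[ℂ] H} (hρHS : IsHS e ρ) (hρsa : adjoint ρ = ρ) (hBHS : IsHS e B)
    (h : ∀ φ, ρ φ ∈ T.domain) (hB : ∀ φ, B φ = T ⟨ρ φ, h φ⟩) :
    HasLiouville e U ρ (B - adjoint B) := by
  set G : ℝ → H →L[ℂ] H := fun t => t⁻¹ • (U t ∘L ρ - ρ) + Complex.I • B
  set Y : ℝ → H →L[ℂ] H := fun t => Complex.I • B - (Complex.I • B) ∘L adjoint (U t)
  have hGHS (t : ℝ) : IsHS e (G t) :=
    (((hρHS.isometry_comp (hU.norm_apply t)).sub hρHS).smul _).add (hBHS.smul _)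
  have hYHS (t : ℝ) : IsHS e (Y t) :=
    (hBHS.smul _).sub ((hBHS.smul _).comp_of_mem_unitary (hU.adjoint_mem_unitary t))
  have hG := tendsto_hsNorm_smul_sub_add hgen hU hBHS h hB
  have hY := (tendsto_hsNorm_sub_comp_adjoint hU (hBHS.smul Complex.I)).mono_left
    (nhdsWithin_le_nhds (s := {0}ᶜ))
  refine ⟨hρHS, hBHS.sub hBHS.adjoint, squeeze_zero (fun t => Real.sqrt_nonneg _)
    (fun t => ?_) (by simpa only [add_zero] using (hG.add hY).add hG)⟩
  have hGadj : ρ ∘L (t⁻¹ • (adjoint (U t) - 1)) - Complex.I • adjoint B = adjoint (G t) := by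
    simp only [G, ← star_eq_adjoint] at hρsa ⊢
    simp [star_smul, hρsa, mul_sub, ← mul_def]
    abel
  have hGU := (hGHS t).comp_of_mem_unitary (hU.adjoint_mem_unitary t)
  rw [conjSup, smul_conj_sub_decomposition, hGadj]
  calc _ ≤ hsNorm e (G t ∘L adjoint (U t) + Y t) + hsNorm e (adjoint (G t)) :=
        hsNorm_add_le (hGU.add (hYHS t)) (hGHS t).adjoint
    _ ≤ hsNorm e (G t ∘L adjoint (U t)) + hsNorm e (Y t) + hsNorm e (adjoint (G t)) := by
        gcongr
        exact hsNorm_add_le hGU (hYHS t)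
    _ = _ := by rw [hsNorm_comp_of_mem_unitary (hU.adjoint_mem_unitary t), hsNorm_adjoint]

end Liouville

theorem HasLiouville.conjSup {e : HilbertBasis ℕ ℂ H} (hU : IsUnitaryGroup U)
    {A L : H →L[ℂ] H} (hAL : HasLiouville e U A L) (t : ℝ) :
    HasLiouville e U (conjSup U t A) (conjSup U t L) := by
  obtain ⟨hA, hL, hlim⟩ := hAL
  refine ⟨(isHS_congr (hU.hsENormSq_conjSup e t A)).2 hA,
    (isHS_congr (hU.hsENormSq_conjSup e t L)).2 hL, hlim.congr fun s => ?_⟩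
  rw [← hsNorm_congr (hU.hsENormSq_conjSup e t _), ← hU.conjSup_add, add_comm, hU.conjSup_add]
  congr 1
  ext φ
  simp [LiouvilleFormalization.conjSup]

theorem statement19_general (e : HilbertBasis ℕ ℂ H) (T : H →ₗ.[ℂ] H)
    (U : ℝ → H →L[ℂ] H) (hU : IsUnitaryGroup U) (hgen : IsGenerator U T)
    (ρ : H →L[ℂ] H) (hρHS : IsHS e ρ) (hρsa : adjoint ρ = ρ)
    (h : ∀ φ : H, ρ φ ∈ T.domain)
    (B : H →L[ℂ] H) (hBHS : IsHS e B) (hB : ∀ φ : H, B φ = T ⟨ρ φ, h φ⟩) :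
    (∃ L : H →L[ℂ] H, HasLiouville e U ρ L) ∧
    ∀ t : ℝ, ∃ Lt : H →L[ℂ] H, HasLiouville e U (conjSup U t ρ) Lt ∧
      Tendsto
        (fun s : ℝ =>
          hsNorm e (s⁻¹ • (conjSup U (t + s) ρ - conjSup U t ρ) - (-Complex.I) • Lt))
        (𝓝[≠] 0) (𝓝 0) := by
  have hρ := hasLiouville_sub_adjoint hgen hU hρHS hρsa hBHS h hB
  refine ⟨⟨_, hρ⟩, fun t => ⟨_, hρ.conjSup hU t, ?_⟩⟩
  have hflow (s : ℝ) : conjSup U (t + s) ρ = conjSup U s (conjSup U t ρ) := by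
    rw [add_comm, hU.conjSup_add]
  simpa only [hflow] using (hρ.conjSup hU t).2.2

/-- if `ρ` is a self-adjoint Hilbert–Schmidt operator mapping `ℋ` into
`Dom H` with `Hρ` an everywhere-defined Hilbert–Schmidt operator, then `ρ ∈ Dom 𝐇`, and
the evolution `ρ(t) = U(t) ρ U(t)*` satisfies the Liouville–von Neumann equation
`i dρ(t)/dt = 𝐇 ρ(t)` in Hilbert–Schmidt norm for all `t ∈ ℝ`. -/
theorem statement19 (e : HilbertBasis ℕ ℂ H) (T : H →ₗ.[ℂ] H) (hT : IsSelfAdjointOp T)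
    (U : ℝ → H →L[ℂ] H) (hU : IsUnitaryGroup U) (hgen : IsGenerator U T)
    (ρ : H →L[ℂ] H) (hρHS : IsHS e ρ) (hρsa : adjoint ρ = ρ)
    (h : ∀ φ : H, ρ φ ∈ T.domain)
    (B : H →L[ℂ] H) (hBHS : IsHS e B) (hB : ∀ φ : H, B φ = T ⟨ρ φ, h φ⟩) :
    (∃ L : H →L[ℂ] H, HasLiouville e U ρ L) ∧
    ∀ t : ℝ, ∃ Lt : H →L[ℂ] H, HasLiouville e U (conjSup U t ρ) Lt ∧
      Tendsto
        (fun s : ℝ =>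
          hsNorm e (s⁻¹ • (conjSup U (t + s) ρ - conjSup U t ρ) - (-Complex.I) • Lt))
        (𝓝[≠] 0) (𝓝 0) :=
  statement19_general e T U hU hgen ρ hρHS hρsa h B hBHS hB

end LiouvilleFormalization
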